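/- arXiv:1911.00256 — 2 statements merged into one kernel-verified Lean document; each statement's English description precedes it below -/
import Mathlib

section
/- Let X : ℝⁿ → ℝⁿ be a continuously differentiable vector field, and define its Presnov potential H_X : ℝⁿ → ℝ by H_X(x) = ∫₀¹ ⟨X(t·x), x⟩ dt. Then X is coercive if and only if the conservative part ∇H_X is coercive; that is, ⟨X(x), x⟩/‖x‖ → ∞ as ‖x‖ → ∞ if and only if ⟨∇H_X(x), x⟩/‖x‖ → ∞ as ‖x‖ → ∞. -/
/-!
Along a ray, the substitution `u = s t` turns the Presnov potential into a primitive: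
`H_X (s • x) = ∫₀ˢ ⟪X (u • x), x⟫ du`. Differentiating at `s = 1` gives the Euler-type identity
`⟪∇H_X x, x⟫ = ⟪X x, x⟫`, so the two quotients in the statement agree pointwise. The only analytic
input is that `H_X` is differentiable, which holds because the integrand is `C¹` in `(x, t)`.
-/

open RealInnerProductSpace Filter
open MeasureTheory Set Topology

theorem hasFDerivAt_intervalIntegral_of_contDiff
    {E G : Type*} [NormedAddCommGroup E] [NormedSpace ℝ E]
    [NormedAddCommGroup G] [NormedSpace ℝ G]
    {F : E → ℝ → G} (hF : ContDiff ℝ 1 (Function.uncurry F)) (a b : ℝ) (x₀ : E) :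
    HasFDerivAt (fun x => ∫ t in a..b, F x t)
      (∫ t in a..b, (fderiv ℝ (Function.uncurry F) (x₀, t)).comp (.inl ℝ E ℝ)) x₀ := by
  set F' : E → ℝ → E →L[ℝ] G := fun x t =>
    (fderiv ℝ (Function.uncurry F) (x, t)).comp (.inl ℝ E ℝ)
  have hF'_cont : Continuous (Function.uncurry F') :=
    ((hF.continuous_fderiv one_ne_zero).comp continuous_id).clm_comp continuous_const
  obtain ⟨C, hC⟩ := isCompact_uIcc.exists_bound_of_continuousOn
    (hF'_cont.comp (Continuous.prodMk_right x₀)).continuousOn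
  -- tube lemma: the bound `C + 1` on `{x₀} × [a, b]` persists on a neighbourhood of `x₀`
  have hbound : ∀ᶠ x in 𝓝 x₀, ∀ t ∈ uIcc a b, ‖F' x t‖ ≤ C + 1 := by
    refine isCompact_uIcc.eventually_forall_of_forall_eventually fun t ht => ?_
    have hlt : ‖Function.uncurry F' (x₀, t)‖ < C + 1 := (hC t ht).trans_lt (lt_add_one C)
    exact (hF'_cont.norm.continuousAt.eventually (gt_mem_nhds hlt)).mono fun _ h => h.le
  have hcont : ∀ x, Continuous (F x) := fun x => hF.continuous.comp (Continuous.prodMk_right x)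
  refine intervalIntegral.hasFDerivAt_integral_of_dominated_of_fderiv_le hbound
    (Eventually.of_forall fun x => (hcont x).aestronglyMeasurable)
    ((hcont x₀).intervalIntegrable _ _)
    (hF'_cont.comp (Continuous.prodMk_right x₀)).aestronglyMeasurable
    (Eventually.of_forall fun t ht x hx => hx t (uIoc_subset_uIcc ht)) intervalIntegrable_const
    (Eventually.of_forall fun t _ x _ => ?_)
  exact (hF.differentiable one_ne_zero (x, t)).hasFDerivAt.comp x
    (hasFDerivAt_prodMk_left (𝕜 := ℝ) x t)

section Presnov

variable {E : Type*} [NormedAddCommGroup E] [InnerProductSpace ℝ E]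

noncomputable def presnovPotential (X : E → E) (x : E) : ℝ :=
  ∫ t in (0:ℝ)..1, ⟪X (t • x), x⟫

theorem presnovPotential_smul (X : E → E) (s : ℝ) (x : E) :
    presnovPotential X (s • x) = ∫ u in (0:ℝ)..s, ⟪X (u • x), x⟫ := by
  have h := intervalIntegral.smul_integral_comp_mul_left (fun u => ⟪X (u • x), x⟫) s
    (a := 0) (b := 1)
  simp only [mul_zero, mul_one, smul_eq_mul] at h
  rw [presnovPotential, ← h, ← intervalIntegral.integral_const_mul]
  simp only [smul_smul, real_inner_smul_right, mul_comm]

theorem hasDerivAt_presnovPotential_smul {X : E → E} (hX : Continuous X) (x : E) (s : ℝ) :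
    HasDerivAt (fun s : ℝ => presnovPotential X (s • x)) ⟪X (s • x), x⟫ s := by
  simp only [presnovPotential_smul]
  exact ((hX.comp (continuous_id.smul continuous_const)).inner continuous_const
    |>.integral_hasStrictDerivAt 0 s).hasDerivAt

theorem differentiable_presnovPotential {X : E → E} (hX : ContDiff ℝ 1 X) :
    Differentiable ℝ (presnovPotential X) := fun x =>
  (hasFDerivAt_intervalIntegral_of_contDiff (F := fun y t => ⟪X (t • y), y⟫)
    ((hX.comp (contDiff_snd.smul contDiff_fst)).inner ℝ contDiff_fst) 0 1 x).differentiableAt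

theorem inner_gradient_presnovPotential [CompleteSpace E] {X : E → E} (hX : ContDiff ℝ 1 X)
    (x : E) : ⟪gradient (presnovPotential X) x, x⟫ = ⟪X x, x⟫ := by
  have hray : HasDerivAt (fun s : ℝ => presnovPotential X (s • x))
      (fderiv ℝ (presnovPotential X) x x) 1 := by
    have hline : HasDerivAt (fun s : ℝ => s • x) x 1 := by
      simpa using (hasDerivAt_id (1 : ℝ)).smul_const x
    exact (differentiable_presnovPotential hX x).hasFDerivAt.comp_hasDerivAt_of_eq 1 hline
      (one_smul ℝ x).symm
  rw [inner_gradient_left, hray.unique (hasDerivAt_presnovPotential_smul hX.continuous x 1),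
    one_smul]

end Presnov

/-- **Coercivity is determined by the conservative part** (Tudoran, Theorem 2.2).
A `C¹` vector field `X` on `ℝⁿ` is coercive iff the gradient of its Presnov
potential `H_X x = ∫₀¹ ⟪X (t • x), x⟫ dt` is coercive. -/
theorem coercive_iff_gradient_presnov_coercive
    {n : ℕ} (X : EuclideanSpace ℝ (Fin n) → EuclideanSpace ℝ (Fin n))
    (hX : ContDiff ℝ 1 X)
    (H : EuclideanSpace ℝ (Fin n) → ℝ)
    (hH : ∀ x, H x = ∫ t in (0:ℝ)..1, ⟪X (t • x), x⟫) :
    Tendsto (fun x => ⟪X x, x⟫ / ‖x‖) (comap (fun x => ‖x‖) atTop) atTop ↔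
      Tendsto (fun x => ⟪gradient H x, x⟫ / ‖x‖) (comap (fun x => ‖x‖) atTop) atTop := by
  obtain rfl : H = presnovPotential X := funext hH
  simp only [inner_gradient_presnovPotential hX]
end

section
/- Let X : ℝⁿ → ℝⁿ be a continuously differentiable vector field, and suppose X(x) = ∇H₁(x) + u₁(x) = ∇H₂(x) + u₂(x) for all x ∈ ℝⁿ, where H₁, H₂ : ℝⁿ → ℝ are continuously differentiable with H₁(0) = H₂(0) = 0 and u₁, u₂ satisfy ⟨u₁(x), x⟩ = ⟨u₂(x), x⟩ = 0 for all x ∈ ℝⁿ. Then H₁ = H₂ and u₁ = u₂. -/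
/-!
Subtracting the two decompositions, `D = H₁ - H₂` has `∇D(x) = u₂(x) - u₁(x)`, which is
orthogonal to `x`. So the derivative of `t ↦ D(t x)`, namely `⟪∇D(t x), x⟫`, vanishes for
`t ≠ 0`, and the mean value theorem on `[0, 1]` gives `D(x) = D(0) = 0`. Then `u₁ = u₂` by
cancellation.
-/

open RealInnerProductSpace

section RadiallyConstant

variable {E : Type*} [NormedAddCommGroup E]

theorem apply_eq_apply_zero_of_fderiv_apply_self_eq_zero [NormedSpace ℝ E] {H : E → ℝ}
    (hH : Differentiable ℝ H) (h : ∀ x, fderiv ℝ H x x = 0) (x : E) : H x = H 0 := by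
  have hline : ∀ t : ℝ, HasDerivAt (fun s : ℝ => H (s • x)) (fderiv ℝ H (t • x) x) t :=
    fun t => by
      simpa [Function.comp_def] using
        (hH (t • x)).hasFDerivAt.comp_hasDerivAt t ((hasDerivAt_id t).smul_const x)
  obtain ⟨c, hc, hslope⟩ :=
    exists_hasDerivAt_eq_slope (fun s : ℝ => H (s • x)) _ zero_lt_one
      (fun t _ => (hline t).continuousAt.continuousWithinAt) (fun t _ => hline t)
  have hc0 : fderiv ℝ H (c • x) x = 0 := by
    have := h (c • x)
    rw [map_smul, smul_eq_mul] at this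
    exact (mul_eq_zero.mp this).resolve_left hc.1.ne'
  rw [hc0] at hslope
  simpa [sub_eq_zero, eq_comm] using hslope

theorem eq_of_inner_gradient_sub_self_eq_zero [InnerProductSpace ℝ E] [CompleteSpace E]
    {H₁ H₂ : E → ℝ} (hH₁ : Differentiable ℝ H₁) (hH₂ : Differentiable ℝ H₂)
    (h : ∀ x, ⟪gradient H₁ x - gradient H₂ x, x⟫ = 0) (h0 : H₁ 0 = H₂ 0) :
    H₁ = H₂ := by
  have hD : ∀ x, fderiv ℝ (H₁ - H₂) x x = 0 := fun x => by
    rw [fderiv_sub (hH₁ x) (hH₂ x), sub_apply, ← inner_gradient_left, ← inner_gradient_left,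
      ← inner_sub_left, h]
  funext x
  have := apply_eq_apply_zero_of_fderiv_apply_self_eq_zero (hH₁.sub hH₂) hD x
  simpa [h0, sub_eq_zero] using this

end RadiallyConstant

theorem presnov_decomposition_unique_general
    {n : ℕ} (X : EuclideanSpace ℝ (Fin n) → EuclideanSpace ℝ (Fin n))
    (H₁ H₂ : EuclideanSpace ℝ (Fin n) → ℝ)
    (hH₁ : ContDiff ℝ 1 H₁) (hH₂ : ContDiff ℝ 1 H₂)
    (hH₁0 : H₁ 0 = 0) (hH₂0 : H₂ 0 = 0)
    (u₁ u₂ : EuclideanSpace ℝ (Fin n) → EuclideanSpace ℝ (Fin n))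
    (hdec₁ : ∀ x, X x = gradient H₁ x + u₁ x)
    (hdec₂ : ∀ x, X x = gradient H₂ x + u₂ x)
    (hu₁ : ∀ x, ⟪u₁ x, x⟫ = 0)
    (hu₂ : ∀ x, ⟪u₂ x, x⟫ = 0) :
    H₁ = H₂ ∧ u₁ = u₂ := by
  have hgrad : ∀ x, gradient H₁ x - gradient H₂ x = u₂ x - u₁ x := fun x => by
    rw [sub_eq_sub_iff_add_eq_add, ← hdec₁, add_comm, ← hdec₂]
  have hH : H₁ = H₂ :=
    eq_of_inner_gradient_sub_self_eq_zero (hH₁.differentiable one_ne_zero)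
      (hH₂.differentiable one_ne_zero)
      (fun x => by rw [hgrad, inner_sub_left, hu₁, hu₂, sub_zero]) (hH₁0.trans hH₂0.symm)
  refine ⟨hH, funext fun x => ?_⟩
  have hsplit := (hdec₁ x).symm.trans (hdec₂ x)
  rw [hH] at hsplit
  exact add_left_cancel hsplit

/-- **Uniqueness of the Presnov decomposition**: if a `C¹` vector field `X` on `ℝⁿ`
decomposes in two ways as a gradient plus a radially orthogonal field, with both
potentials `C¹` and vanishing at the origin, then the two decompositions coincide. -/
theorem presnov_decomposition_unique
    {n : ℕ} (X : EuclideanSpace ℝ (Fin n) → EuclideanSpace ℝ (Fin n))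
    (hX : ContDiff ℝ 1 X)
    (H₁ H₂ : EuclideanSpace ℝ (Fin n) → ℝ)
    (hH₁ : ContDiff ℝ 1 H₁) (hH₂ : ContDiff ℝ 1 H₂)
    (hH₁0 : H₁ 0 = 0) (hH₂0 : H₂ 0 = 0)
    (u₁ u₂ : EuclideanSpace ℝ (Fin n) → EuclideanSpace ℝ (Fin n))
    (hdec₁ : ∀ x, X x = gradient H₁ x + u₁ x)
    (hdec₂ : ∀ x, X x = gradient H₂ x + u₂ x)
    (hu₁ : ∀ x, ⟪u₁ x, x⟫ = 0)
    (hu₂ : ∀ x, ⟪u₂ x, x⟫ = 0) :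
    H₁ = H₂ ∧ u₁ = u₂ :=
  presnov_decomposition_unique_general X H₁ H₂ hH₁ hH₂ hH₁0 hH₂0 u₁ u₂ hdec₁ hdec₂ hu₁ hu₂
end
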